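/- Let (R,m) be a one-dimensional Cohen–Macaulay local ring and I a regular trace ideal. If I = (x):I for some nonzerodivisor x ∈ I, then I ≅ I* = Hom_R(I,R) as R-modules. -/

import Mathlib

open nonZeroDivisors IsLocalRing

/-- The trace ideal of an `R`-module `M`. -/
noncomputable def traceIdeal (R : Type*) [CommRing R] (M : Type*) [AddCommGroup M]
    [Module R M] : Ideal R :=
  ⨆ f : M →ₗ[R] R, LinearMap.range f

/-!
A homomorphism `f : I → R` is determined by `f x`, because `x * f b = b * f x` for all `b ∈ I`
and `x` is a nonzerodivisor. The same identity shows `f x ∈ (x) : I`, and conversely every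
`a ∈ (x) : I` arises this way from `b ↦ a b / x`. Hence `I* ≅ (x) : I`, which is `I`.
-/

section

variable {R : Type*} [CommRing R]

theorem LinearMap.exists_mul_eq_of_range_le_span_singleton {M : Type*} [AddCommGroup M]
    [Module R M] {x : R} (hx : x ∈ nonZeroDivisorsRight R) (φ : M →ₗ[R] R)
    (hφ : range φ ≤ Ideal.span {x}) : ∃ ψ : M →ₗ[R] R, ∀ m, ψ m * x = φ m := by
  have hinj : Function.Injective (toSpanSingleton R R x) :=
    LinearMap.ker_eq_bot.mp (ker_toSpanSingleton_eq_bot_iff.mpr hx)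
  let e := LinearEquiv.ofInjective _ hinj
  have hrange (m : M) : φ m ∈ range (toSpanSingleton R R x) := by
    rw [← span_singleton_eq_range]
    exact hφ (mem_range_self φ m)
  refine ⟨e.symm.toLinearMap ∘ₗ φ.codRestrict _ hrange, fun m => ?_⟩
  change toSpanSingleton R R x (e.symm ⟨φ m, hrange m⟩) = φ m
  rw [← LinearEquiv.ofInjective_apply (h := hinj), LinearEquiv.apply_symm_apply]

namespace Ideal

variable {I : Ideal R}

theorem smul_apply_comm {M : Type*} [AddCommGroup M] [Module R M] (f : I →ₗ[R] M) (a b : I) :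
    (a : R) • f b = (b : R) • f a := by
  rw [← map_smul, ← map_smul]
  exact congrArg f (Subtype.ext (mul_comm _ _))

theorem apply_mem_colon_span_singleton (f : I →ₗ[R] R) (a : I) :
    f a ∈ (span {(a : R)}).colon I := by
  refine Submodule.mem_colon.mpr fun b hb => mem_span_singleton'.mpr ⟨f ⟨b, hb⟩, ?_⟩
  simpa [mul_comm] using (smul_apply_comm f ⟨b, hb⟩ a).symm

noncomputable def dualEvalColon {x : R} (hxI : x ∈ I) :
    (I →ₗ[R] R) →ₗ[R] (span {x}).colon I :=
  (LinearMap.applyₗ (⟨x, hxI⟩ : I)).codRestrict _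
    fun f => apply_mem_colon_span_singleton f ⟨x, hxI⟩

theorem dualEvalColon_injective {x : R} (hxI : x ∈ I) (hx : x ∈ R⁰) :
    Function.Injective (dualEvalColon hxI) := by
  refine (injective_iff_map_eq_zero _).mpr fun f hf => LinearMap.ext fun b => ?_
  have hfx : f ⟨x, hxI⟩ = 0 := congrArg Subtype.val hf
  have hxfb := smul_apply_comm f ⟨x, hxI⟩ b
  rw [hfx, smul_zero, smul_eq_mul] at hxfb
  exact (mul_left_mem_nonZeroDivisors_eq_zero_iff hx).mp hxfb

theorem dualEvalColon_surjective {x : R} (hxI : x ∈ I) (hx : x ∈ R⁰) :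
    Function.Surjective (dualEvalColon hxI) := by
  rintro ⟨a, ha⟩
  have hrange : LinearMap.range (a • I.subtype) ≤ span {x} := by
    rintro _ ⟨b, rfl⟩
    exact Submodule.mem_colon.mp ha b b.2
  obtain ⟨ψ, hψ⟩ := LinearMap.exists_mul_eq_of_range_le_span_singleton hx.2 _ hrange
  exact ⟨ψ, Subtype.ext ((mul_cancel_right_mem_nonZeroDivisors hx).mp (hψ ⟨x, hxI⟩))⟩

noncomputable def dualEquivColon {x : R} (hxI : x ∈ I) (hx : x ∈ R⁰) :
    (I →ₗ[R] R) ≃ₗ[R] (span {x}).colon I :=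
  .ofBijective (dualEvalColon hxI)
    ⟨dualEvalColon_injective hxI hx, dualEvalColon_surjective hxI hx⟩

end Ideal

end

theorem trace_self_dual (R : Type*) [CommRing R]
    (I : Ideal R)
    (x : R) (hxI : x ∈ I) (hx : x ∈ R⁰)
    (hcolon : I = (Ideal.span {x}).colon I) :
    Nonempty (I ≃ₗ[R] (I →ₗ[R] R)) :=
  ⟨(LinearEquiv.ofEq _ _ hcolon).trans (Ideal.dualEquivColon hxI hx).symm⟩
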